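/- arXiv:2405.06878 — 3 statements merged into one kernel-verified Lean document; each statement's English description precedes it below -/
import Mathlib

section
/- Let T > 0, let c ∈ L∞((0,T)×Ω) and let u ∈ C¹([0,T]×[l₁,l₂]) satisfy u_t(t,x) ≥ d(∫_Ω J(x−y)u(t,y)dy − u(t,x)) − q u_x(t,x) + c(t,x)u(t,x) for all (t,x) ∈ (0,T)×Ω, u(t,l₁) ≥ 0 for all t ∈ (0,T), and u(0,x) = u₀(x) ≥ 0 on [l₁,l₂]. Then u(t,x) ≥ 0 on [0,T]×[l₁,l₂]; moreover, if u₀ ≢ 0 on [l₁,l₂], then u(t,x) > 0 for all (t,x) ∈ (0,T]×(l₁,l₂]. -/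
/-!
Along the characteristics `s ↦ (s, B + q s)` of the advection term the differential inequality
becomes an ODE inequality for `s ↦ e^{K s} u(s, B + q s)`, so every step is a monotonicity
statement along these lines.

Nonnegativity: suppose the minimum `μ` of `e^{-(C+1)t} u` on `[0,T] × [l₁,l₂]`, where `c ≤ C`, is
negative. It is not attained at `t = 0` or at `x = l₁`. Near the minimum point, `∫_Ω J ≤ 1`
bounds the nonlocal term below by `μ` and `c - (C+1) ≤ -1` makes the local term large, so the
weighted function grows strictly along the backward characteristic and was below `μ` a moment
earlier.

Positivity: once `u ≥ 0` and `c ≥ -C`, `e^{(d+C)t} u` is nondecreasing along characteristics,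
so a positive cluster is transported to the right. Since `J > 0` near `0`, a cluster of length
`ℓ` keeps `d ∫_Ω J(x - y) u(t,y) dy` bounded below on all characteristics within `δ` of it,
which makes `u` positive within `δ/2` of the cluster after any short time. Finitely many such
steps carry the positivity of `u₀` near `x₀` to any point of `(0,T] × (l₁,l₂]`.
-/

open MeasureTheory Set Filter Topology Real

theorem holds_of_small_steps {P : ℝ → ℝ → Prop} {A : Set ℝ} (hA : Convex ℝ A)
    {τ₀ r t a₀ a₁ : ℝ} (hτ₀ : 0 < τ₀) (hr : 0 < r) (ht : 0 < t) (ha₀ : a₀ ∈ A) (ha₁ : a₁ ∈ A)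
    (h₀ : P 0 a₀)
    (hstep : ∀ s τ a a', 0 ≤ s → 0 < τ → τ ≤ τ₀ → s + τ ≤ t → a ∈ A → a' ∈ A →
      |a' - a| ≤ r → P s a → P (s + τ) a') :
    P t a₁ := by
  obtain ⟨n, hn⟩ := exists_nat_gt (max (t / τ₀) (|a₁ - a₀| / r))
  have hn₀ : (0 : ℝ) < n := (lt_max_of_lt_left (div_pos ht hτ₀)).trans hn
  have hτ : t / n ≤ τ₀ := by
    rw [div_le_iff₀ hn₀, mul_comm, ← div_le_iff₀ hτ₀]; exact ((le_max_left _ _).trans_lt hn).le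
  have hshift : |a₁ - a₀| / n ≤ r := by
    rw [div_le_iff₀ hn₀, mul_comm, ← div_le_iff₀ hr]; exact ((le_max_right _ _).trans_lt hn).le
  set a : ℕ → ℝ := fun k ↦ a₀ + ((k : ℝ) / n) • (a₁ - a₀)
  have ha : ∀ k ≤ n, a k ∈ A := fun k hk ↦ hA.add_smul_sub_mem ha₀ ha₁
    ⟨by positivity, (div_le_one hn₀).2 (by exact_mod_cast hk)⟩
  have hchain : ∀ k ≤ n, P (k * (t / n)) (a k) := by
    intro k
    induction k with
    | zero => intro _; simpa [a] using h₀
    | succ k ih =>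
      intro hk
      have hsucc : (k : ℝ) * (t / n) + t / n = ((k + 1 : ℕ) : ℝ) * (t / n) := by push_cast; ring
      have hle : (k : ℝ) * (t / n) + t / n ≤ t :=
        calc (k : ℝ) * (t / n) + t / n = ((k + 1 : ℕ) : ℝ) * (t / n) := hsucc
          _ ≤ n * (t / n) := by gcongr
          _ = t := mul_div_cancel₀ t hn₀.ne'
      have hdist : |a (k + 1) - a k| ≤ r := by
        have : a (k + 1) - a k = (a₁ - a₀) / n := by simp only [a, smul_eq_mul]; push_cast; ring
        rwa [this, abs_div, abs_of_pos hn₀]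
      rw [← hsucc]
      exact hstep _ _ _ _ (by positivity) (div_pos ht hn₀) hτ hle (ha k (by omega))
        (ha (k + 1) hk) hdist (ih (by omega))
  have := hchain n le_rfl
  rwa [mul_div_cancel₀ _ hn₀.ne', show a n = a₁ by simp [a, div_self hn₀.ne']] at this

theorem exists_Icc_subset_pos {f : ℝ → ℝ} {l₁ l₂ x : ℝ} (hf : ContinuousOn f (Icc l₁ l₂))
    (hl : l₁ < l₂) (hx : x ∈ Icc l₁ l₂) (hfx : 0 < f x) :
    ∃ a ℓ, 0 < ℓ ∧ l₁ < a ∧ a + ℓ < l₂ ∧ ∀ y ∈ Icc a (a + ℓ), 0 < f y := by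
  have hU : IsOpen (Ioo l₁ l₂ ∩ f ⁻¹' Ioi 0) :=
    (hf.mono Ioo_subset_Icc_self).isOpen_inter_preimage isOpen_Ioo isOpen_Ioi
  have hne : (𝓝[Ioo l₁ l₂] x).NeBot :=
    mem_closure_iff_nhdsWithin_neBot.1 (by rwa [closure_Ioo hl.ne])
  obtain ⟨p, hpΩ, hp⟩ := (eventually_mem_nhdsWithin.and
    (((hf x hx).mono Ioo_subset_Icc_self).eventually (lt_mem_nhds hfx))).exists
  obtain ⟨ρ, hρ, hball⟩ := Metric.isOpen_iff.1 hU p ⟨hpΩ, hp⟩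
  have hsub : Icc p (p + ρ / 2) ⊆ Metric.ball p ρ := fun y hy ↦ by
    rw [Metric.mem_ball, Real.dist_eq, abs_lt]; constructor <;> linarith [hy.1, hy.2]
  exact ⟨p, ρ / 2, half_pos hρ, hpΩ.1, (hball (hsub ⟨by linarith, le_rfl⟩)).1.2,
    fun y hy ↦ (hball (hsub hy)).2⟩

section Kernel

variable {J : ℝ → ℝ}

theorem setIntegral_kernel_le_one (hJnn : ∀ x, 0 ≤ J x) (hJint : Integrable J)
    (hJ1 : ∫ x, J x = 1) (s : Set ℝ) (x : ℝ) : ∫ y in s, J (x - y) ≤ 1 :=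
  calc ∫ y in s, J (x - y) ≤ ∫ y, J (x - y) :=
        setIntegral_le_integral ((integrable_comp_sub_left J x).2 hJint)
          (Eventually.of_forall fun _ ↦ hJnn _)
    _ = 1 := by rw [integral_sub_left_eq_self J volume x, hJ1]

theorem le_setIntegral_kernel_mul (hJnn : ∀ x, 0 ≤ J x) (hJint : Integrable J)
    (hJ1 : ∫ x, J x = 1) {s : Set ℝ} (hs : MeasurableSet s) {v : ℝ → ℝ} {x β : ℝ}
    (hv : IntegrableOn (fun y ↦ J (x - y) * v y) s) (hβ : β ≤ 0) (hβv : ∀ y ∈ s, β ≤ v y) :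
    β ≤ ∫ y in s, J (x - y) * v y := by
  have hJx : IntegrableOn (fun y ↦ J (x - y)) s :=
    ((integrable_comp_sub_left J x).2 hJint).integrableOn
  calc β ≤ (∫ y in s, J (x - y)) * β :=
        le_mul_of_le_one_left hβ (setIntegral_kernel_le_one hJnn hJint hJ1 s x)
    _ = ∫ y in s, J (x - y) * β := (integral_mul_const _ _).symm
    _ ≤ ∫ y in s, J (x - y) * v y :=
        setIntegral_mono_on (hJx.mul_const β) hv hs fun y hy ↦
          mul_le_mul_of_nonneg_left (hβv y hy) (hJnn _)

theorem mul_le_setIntegral_kernel_mul (hJnn : ∀ x, 0 ≤ J x) {v : ℝ → ℝ} {l₁ l₂ b w z j m : ℝ}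
    (hv : IntegrableOn (fun y ↦ J (z - y) * v y) (Ioo l₁ l₂)) (hvnn : ∀ y ∈ Ioo l₁ l₂, 0 ≤ v y)
    (hw : 0 ≤ w) (hb : l₁ ≤ b) (hbw : b + w ≤ l₂) (hm : 0 ≤ m)
    (hJ : ∀ y ∈ Ioo b (b + w), j ≤ J (z - y)) (hvm : ∀ y ∈ Ioo b (b + w), m ≤ v y) :
    w * (j * m) ≤ ∫ y in Ioo l₁ l₂, J (z - y) * v y := by
  have hsub : Ioo b (b + w) ⊆ Ioo l₁ l₂ := Ioo_subset_Ioo hb hbw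
  calc w * (j * m) = volume.real (Ioo b (b + w)) • (j * m) := by
        rw [Real.volume_real_Ioo_of_le (by linarith), smul_eq_mul, add_sub_cancel_left]
    _ ≤ ∫ y in Ioo b (b + w), J (z - y) * v y :=
        setIntegral_ge_of_const_le measurableSet_Ioo measure_Ioo_lt_top.ne
          (fun y hy ↦ mul_le_mul (hJ y hy) (hvm y hy) hm (hJnn _)) (hv.mono_set hsub)
    _ ≤ ∫ y in Ioo l₁ l₂, J (z - y) * v y :=
        setIntegral_mono_set hv ((ae_restrict_mem measurableSet_Ioo).mono fun y hy ↦
          mul_nonneg (hJnn _) (hvnn y hy)) hsub.eventuallyLE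

theorem integrableOn_kernel_mul (hJc : Continuous J) {v : ℝ → ℝ} {a b : ℝ}
    (hv : ContinuousOn v (Icc a b)) (x : ℝ) : IntegrableOn (fun y ↦ J (x - y) * v y) (Ioo a b) :=
  (((hJc.comp (continuous_sub_left x)).continuousOn).mul hv).integrableOn_Icc.mono_set
    Ioo_subset_Icc_self

end Kernel

theorem hasDerivAt_comp_characteristic {f : ℝ → ℝ → ℝ} {B q σ : ℝ}
    (hf : DifferentiableAt ℝ (fun p : ℝ × ℝ ↦ f p.1 p.2) (σ, B + q * σ)) :
    HasDerivAt (fun s ↦ f s (B + q * s))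
      (deriv (fun s ↦ f s (B + q * σ)) σ + q * deriv (fun y ↦ f σ y) (B + q * σ)) σ := by
  have hF := hf.hasFDerivAt
  set L := fderiv ℝ (fun p : ℝ × ℝ ↦ f p.1 p.2) (σ, B + q * σ)
  have ht : HasDerivAt (fun s ↦ f s (B + q * σ)) (L (1, 0)) σ := by
    simpa [Function.comp_def] using
      hF.comp_hasDerivAt σ ((hasDerivAt_id σ).prodMk (hasDerivAt_const σ (B + q * σ)))
  have hx : HasDerivAt (fun y ↦ f σ y) (L (0, 1)) (B + q * σ) := by
    simpa [Function.comp_def] using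
      hF.comp_hasDerivAt (B + q * σ) ((hasDerivAt_const _ σ).prodMk (hasDerivAt_id _))
  have hγ : HasDerivAt (fun s : ℝ ↦ (s, B + q * s)) ((1 : ℝ), q) σ :=
    (hasDerivAt_id σ).prodMk (by simpa using ((hasDerivAt_id σ).const_mul q).const_add B)
  have hL : L (1, q) = L (1, 0) + q * L (0, 1) := by
    rw [← smul_eq_mul, ← L.map_smul, ← L.map_add]; simp
  rw [ht.deriv, hx.deriv, ← hL]
  exact hF.comp_hasDerivAt σ hγ

section Characteristics

variable {l₁ l₂ d q T : ℝ} {J : ℝ → ℝ} {c u : ℝ → ℝ → ℝ}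

def IsSupersolution (l₁ l₂ d q T : ℝ) (J : ℝ → ℝ) (c u : ℝ → ℝ → ℝ) : Prop :=
  ∀ t ∈ Ioo 0 T, ∀ x ∈ Ioo l₁ l₂,
    deriv (fun s ↦ u s x) t ≥
      d * ((∫ y in Ioo l₁ l₂, J (x - y) * u t y) - u t x) - q * deriv (fun y ↦ u t y) x +
        c t x * u t x

theorem continuousOn_slice
    (hu : ContinuousOn (fun p : ℝ × ℝ ↦ u p.1 p.2) (Icc 0 T ×ˢ Icc l₁ l₂)) {t : ℝ}
    (ht : t ∈ Icc 0 T) : ContinuousOn (fun y ↦ u t y) (Icc l₁ l₂) :=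
  hu.comp (continuous_const.prodMk continuous_id).continuousOn fun _ hy ↦ ⟨ht, hy⟩

theorem characteristic_mem_Icc_prod (hq : 0 ≤ q) {B α β σ : ℝ} (hα : 0 ≤ α) (hβ : β ≤ T)
    (hBα : l₁ ≤ B + q * α) (hBβ : B + q * β ≤ l₂) (hσ : σ ∈ Icc α β) :
    (σ, B + q * σ) ∈ Icc 0 T ×ˢ Icc l₁ l₂ := by
  have := mul_le_mul_of_nonneg_left hσ.1 hq
  have := mul_le_mul_of_nonneg_left hσ.2 hq
  exact ⟨⟨hα.trans hσ.1, hσ.2.trans hβ⟩, by linarith, by linarith⟩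

theorem characteristic_mem_Ioo_prod (hq : 0 < q) {B α β σ : ℝ} (hα : 0 ≤ α) (hβ : β ≤ T)
    (hBα : l₁ ≤ B + q * α) (hBβ : B + q * β ≤ l₂) (hσ : σ ∈ Ioo α β) :
    (σ, B + q * σ) ∈ Ioo 0 T ×ˢ Ioo l₁ l₂ := by
  have := mul_lt_mul_of_pos_left hσ.1 hq
  have := mul_lt_mul_of_pos_left hσ.2 hq
  exact ⟨⟨hα.trans_lt hσ.1, hσ.2.trans_le hβ⟩, by linarith, by linarith⟩

theorem monotoneOn_exp_mul_characteristic_sub (hq : 0 < q)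
    (hu : ContDiffOn ℝ 1 (fun p : ℝ × ℝ ↦ u p.1 p.2) (Icc 0 T ×ˢ Icc l₁ l₂))
    (hsup : IsSupersolution l₁ l₂ d q T J c u) {K B θ α β : ℝ} (hα : 0 ≤ α) (hβ : β ≤ T)
    (hBα : l₁ ≤ B + q * α) (hBβ : B + q * β ≤ l₂)
    (hθ : ∀ σ ∈ Ioo α β, θ ≤ exp (K * σ) * ((K - d + c σ (B + q * σ)) * u σ (B + q * σ) +
      d * ∫ y in Ioo l₁ l₂, J (B + q * σ - y) * u σ y)) :
    MonotoneOn (fun σ ↦ exp (K * σ) * u σ (B + q * σ) - θ * σ) (Icc α β) := by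
  have hcont : ContinuousOn (fun σ ↦ u σ (B + q * σ)) (Icc α β) :=
    hu.continuousOn.comp (by fun_prop) fun σ hσ ↦
      characteristic_mem_Icc_prod hq.le hα hβ hBα hBβ hσ
  have hderiv : ∀ σ ∈ Ioo α β, HasDerivAt (fun σ ↦ exp (K * σ) * u σ (B + q * σ) - θ * σ)
      (exp (K * σ) * (K * u σ (B + q * σ) + (deriv (fun s ↦ u s (B + q * σ)) σ +
        q * deriv (fun y ↦ u σ y) (B + q * σ))) - θ) σ := by
    intro σ hσ
    have hdiff : DifferentiableAt ℝ (fun p : ℝ × ℝ ↦ u p.1 p.2) (σ, B + q * σ) :=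
      (hu.differentiableOn one_ne_zero).differentiableAt <| mem_of_superset
        ((isOpen_Ioo.prod isOpen_Ioo).mem_nhds (characteristic_mem_Ioo_prod hq hα hβ hBα hBβ hσ))
        (prod_mono Ioo_subset_Icc_self Ioo_subset_Icc_self)
    have hexp : HasDerivAt (fun σ ↦ exp (K * σ)) (exp (K * σ) * K) σ := by
      simpa using ((hasDerivAt_id σ).const_mul K).exp
    exact ((hexp.mul (hasDerivAt_comp_characteristic hdiff)).sub
      ((hasDerivAt_id σ).const_mul θ)).congr_deriv (by ring)
  rw [← interior_Icc] at hderiv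
  refine monotoneOn_of_hasDerivWithinAt_nonneg (convex_Icc α β)
    (((continuous_exp.comp (continuous_const_mul K)).continuousOn.mul hcont).sub (by fun_prop))
    (fun σ hσ ↦ (hderiv σ hσ).hasDerivWithinAt) fun σ hσ ↦ ?_
  rw [interior_Icc] at hσ
  obtain ⟨hσT, hσx⟩ := characteristic_mem_Ioo_prod hq hα hβ hBα hBβ hσ
  nlinarith [hθ σ hσ, hsup σ hσT _ hσx, exp_pos (K * σ)]

theorem nonneg_boundary_of_nonneg_Ioo
    (hu : ContinuousOn (fun p : ℝ × ℝ ↦ u p.1 p.2) (Icc 0 T ×ˢ Icc l₁ l₂)) (hl : l₁ ≤ l₂)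
    (hbd : ∀ t ∈ Ioo 0 T, 0 ≤ u t l₁) {t : ℝ} (ht : t ∈ Ioc 0 T) : 0 ≤ u t l₁ := by
  have hcont : ContinuousOn (fun s ↦ u s l₁) (Icc 0 T) :=
    hu.comp (continuous_id.prodMk continuous_const).continuousOn fun _ hs ↦ ⟨hs, le_rfl, hl⟩
  have hcl : t ∈ closure (Ioo 0 T) := by
    rw [closure_Ioo (ht.1.trans_le ht.2).ne]; exact Ioc_subset_Icc_self ht
  simpa using ((hcont t (Ioc_subset_Icc_self ht)).mono Ioo_subset_Icc_self).mem_closure hcl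
    (t := Ici 0) hbd

theorem exists_backward_characteristic_lt_add {f : ℝ × ℝ → ℝ} (hq : 0 ≤ q)
    (hf : ContinuousOn f (Icc 0 T ×ˢ Icc l₁ l₂)) {t₀ x₀ ε : ℝ} (ht₀ : t₀ ∈ Ioc 0 T)
    (hx₀ : x₀ ∈ Ioc l₁ l₂) (hε : 0 < ε) :
    ∃ α < t₀, 0 ≤ α ∧ l₁ ≤ x₀ - q * t₀ + q * α ∧
      ∀ σ ∈ Icc α t₀, f (σ, x₀ - q * t₀ + q * σ) < f (t₀, x₀) + ε := by
  have hnear : ∀ᶠ σ in 𝓝[≤] t₀, 0 < σ ∧ l₁ < x₀ - q * t₀ + q * σ := by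
    refine nhdsWithin_le_nhds ((eventually_gt_nhds ht₀.1).and ?_)
    have : Tendsto (fun σ ↦ x₀ - q * t₀ + q * σ) (𝓝 t₀) (𝓝 (x₀ - q * t₀ + q * t₀)) :=
      (continuous_const.add (continuous_const_mul q)).tendsto t₀
    exact this.eventually (eventually_gt_nhds (by simpa using hx₀.1))
  have hmem : ∀ᶠ σ in 𝓝[≤] t₀, (σ, x₀ - q * t₀ + q * σ) ∈ Icc 0 T ×ˢ Icc l₁ l₂ := by
    filter_upwards [hnear, self_mem_nhdsWithin] with σ hσ hσt₀
    have := mul_le_mul_of_nonneg_left (show σ ≤ t₀ from hσt₀) hq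
    exact ⟨⟨hσ.1.le, hσt₀.trans ht₀.2⟩, hσ.2.le, by linarith [hx₀.2]⟩
  have htend : Tendsto (fun σ ↦ (σ, x₀ - q * t₀ + q * σ)) (𝓝[≤] t₀)
      (𝓝[Icc 0 T ×ˢ Icc l₁ l₂] (t₀, x₀)) := by
    refine tendsto_nhdsWithin_iff.2 ⟨?_, hmem⟩
    have hγ : Continuous fun σ : ℝ ↦ (σ, x₀ - q * t₀ + q * σ) := by fun_prop
    simpa using hγ.continuousAt.mono_left (nhdsWithin_le_nhds (a := t₀) (s := Iic t₀))
  have hclose := htend.eventually ((hf _ ⟨⟨ht₀.1.le, ht₀.2⟩, hx₀.1.le, hx₀.2⟩).eventually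
    (eventually_lt_nhds (lt_add_of_pos_right _ hε)))
  obtain ⟨l, hlt, hsub⟩ := mem_nhdsLE_iff_exists_Ioc_subset.1 (hnear.and hclose)
  have hmid : (l + t₀) / 2 ∈ Ioc l t₀ := ⟨by linarith [mem_Iio.1 hlt], by linarith [mem_Iio.1 hlt]⟩
  exact ⟨(l + t₀) / 2, by linarith [mem_Iio.1 hlt], (hsub hmid).1.1.le, (hsub hmid).1.2.le,
    fun σ hσ ↦ (hsub ⟨hmid.1.trans_le hσ.1, hσ.2⟩).2⟩

theorem neg_sub_le_reaction_of_near_min (hd : 0 ≤ d) (hJnn : ∀ x, 0 ≤ J x)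
    (hJint : Integrable J) (hJ1 : ∫ x, J x = 1) {v : ℝ → ℝ} {x E K c₀ μ δ : ℝ}
    (hv : IntegrableOn (fun y ↦ J (x - y) * v y) (Ioo l₁ l₂)) (hE : 0 < E)
    (hmin : ∀ y ∈ Ioo l₁ l₂, μ ≤ E * v y) (hx : E * v x ≤ μ + δ) (hδ : 0 ≤ δ) (hδμ : δ ≤ -μ)
    (hK : c₀ + 1 ≤ K) :
    -μ - (1 + d) * δ ≤ E * ((-K - d + c₀) * v x + d * ∫ y in Ioo l₁ l₂, J (x - y) * v y) := by
  have hI : μ / E ≤ ∫ y in Ioo l₁ l₂, J (x - y) * v y :=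
    le_setIntegral_kernel_mul hJnn hJint hJ1 measurableSet_Ioo hv
      (div_nonpos_of_nonpos_of_nonneg (by linarith) hE.le)
      fun y hy ↦ (div_le_iff₀' hE).2 (hmin y hy)
  have hEI : μ ≤ E * ∫ y in Ioo l₁ l₂, J (x - y) * v y := (div_le_iff₀' hE).1 hI
  nlinarith [mul_le_mul_of_nonneg_left hEI hd,
    mul_nonneg (sub_nonneg.2 hK) (by linarith : 0 ≤ -(E * v x)),
    mul_le_mul_of_nonneg_left hx (by linarith : 0 ≤ 1 + d)]

theorem nonneg_of_isMinOn_exp_mul (hd : 0 ≤ d) (hq : 0 < q) (hJc : Continuous J)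
    (hJnn : ∀ x, 0 ≤ J x) (hJint : Integrable J) (hJ1 : ∫ x, J x = 1) {K : ℝ}
    (hc : ∀ t ∈ Ioo 0 T, ∀ x ∈ Ioo l₁ l₂, c t x + 1 ≤ K)
    (hu : ContDiffOn ℝ 1 (fun p : ℝ × ℝ ↦ u p.1 p.2) (Icc 0 T ×ˢ Icc l₁ l₂))
    (hsup : IsSupersolution l₁ l₂ d q T J c u) {t₀ x₀ : ℝ} (ht₀ : t₀ ∈ Ioc 0 T)
    (hx₀ : x₀ ∈ Ioc l₁ l₂)
    (hmin : ∀ p ∈ Icc 0 T ×ˢ Icc l₁ l₂, exp (-K * t₀) * u t₀ x₀ ≤ exp (-K * p.1) * u p.1 p.2) :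
    0 ≤ exp (-K * t₀) * u t₀ x₀ := by
  set μ := exp (-K * t₀) * u t₀ x₀
  by_contra! hμ
  set δ := -μ / (2 * (1 + d))
  have hδ : 0 < δ := div_pos (by linarith) (by linarith)
  obtain ⟨α, hαt₀, hα, hBα, hclose⟩ := exists_backward_characteristic_lt_add hq.le
    ((by fun_prop : Continuous fun p : ℝ × ℝ ↦ exp (-K * p.1)).continuousOn.mul hu.continuousOn)
    ht₀ hx₀ hδ
  have hBt₀ : x₀ - q * t₀ + q * t₀ ≤ l₂ := by linarith [hx₀.2]
  have hmono := monotoneOn_exp_mul_characteristic_sub (K := -K) (θ := -μ / 2) hq hu hsup hα ht₀.2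
    hBα hBt₀ fun σ hσ ↦ ?_
  · have hαt₀' := hmono ⟨le_rfl, hαt₀.le⟩ ⟨hαt₀.le, le_rfl⟩ hαt₀.le
    have hαmin := hmin _ (characteristic_mem_Icc_prod hq.le hα ht₀.2 hBα hBt₀ ⟨le_rfl, hαt₀.le⟩)
    simp only [sub_add_cancel] at hαt₀'
    nlinarith [mul_neg_of_neg_of_pos hμ (sub_pos.2 hαt₀)]
  · obtain ⟨hσT, hσx⟩ := characteristic_mem_Ioo_prod hq hα ht₀.2 hBα hBt₀ hσ
    have hσT' : σ ∈ Icc 0 T := Ioo_subset_Icc_self hσT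
    have hδμ : -μ / 2 = -μ - (1 + d) * δ := by simp only [δ]; field_simp; ring
    rw [hδμ]
    exact neg_sub_le_reaction_of_near_min hd hJnn hJint hJ1
      (integrableOn_kernel_mul hJc (continuousOn_slice hu.continuousOn hσT') _) (exp_pos _)
      (fun y hy ↦ hmin (σ, y) ⟨hσT', Ioo_subset_Icc_self hy⟩)
      (hclose σ (Ioo_subset_Icc_self hσ)).le hδ.le (div_le_self (by linarith) (by linarith))
      (hc σ hσT _ hσx)

theorem nonneg_of_isSupersolution (hd : 0 ≤ d) (hq : 0 < q) (hJc : Continuous J)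
    (hJnn : ∀ x, 0 ≤ J x) (hJint : Integrable J) (hJ1 : ∫ x, J x = 1) {C : ℝ}
    (hc : ∀ t ∈ Ioo 0 T, ∀ x ∈ Ioo l₁ l₂, c t x ≤ C)
    (hu : ContDiffOn ℝ 1 (fun p : ℝ × ℝ ↦ u p.1 p.2) (Icc 0 T ×ˢ Icc l₁ l₂))
    (hsup : IsSupersolution l₁ l₂ d q T J c u) (hbd : ∀ t ∈ Ioo 0 T, 0 ≤ u t l₁)
    (h0 : ∀ x ∈ Icc l₁ l₂, 0 ≤ u 0 x) : ∀ t ∈ Icc 0 T, ∀ x ∈ Icc l₁ l₂, 0 ≤ u t x := by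
  by_contra! hneg
  obtain ⟨t₁, ht₁, x₁, hx₁, hu₁⟩ := hneg
  obtain ⟨⟨t₀, x₀⟩, ⟨ht₀, hx₀⟩, hmin⟩ := (isCompact_Icc.prod isCompact_Icc).exists_isMinOn
    ⟨(t₁, x₁), ht₁, hx₁⟩ ((by fun_prop : Continuous fun p : ℝ × ℝ ↦ exp (-(C + 1) * p.1)
      ).continuousOn.mul hu.continuousOn)
  rw [isMinOn_iff] at hmin
  have hμ : exp (-(C + 1) * t₀) * u t₀ x₀ < 0 :=
    (hmin (t₁, x₁) ⟨ht₁, hx₁⟩).trans_lt (mul_neg_of_pos_of_neg (exp_pos _) hu₁)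
  have ht₀' : 0 < t₀ := ht₀.1.lt_of_ne fun h ↦ by
    subst h; exact hμ.not_ge (by simpa using h0 x₀ hx₀)
  have hx₀' : l₁ < x₀ := hx₀.1.lt_of_ne fun h ↦ by
    subst h
    exact hμ.not_ge (mul_nonneg (exp_pos _).le
      (nonneg_boundary_of_nonneg_Ioo hu.continuousOn hx₀.2 hbd ⟨ht₀', ht₀.2⟩))
  exact hμ.not_ge (nonneg_of_isMinOn_exp_mul hd hq hJc hJnn hJint hJ1
    (fun t ht x hx ↦ by linarith [hc t ht x hx]) hu hsup ⟨ht₀', ht₀.2⟩ ⟨hx₀', hx₀.2⟩ hmin)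

theorem exp_mul_le_along_characteristic (hd : 0 ≤ d) (hq : 0 < q) (hJnn : ∀ x, 0 ≤ J x)
    {C : ℝ} (hc : ∀ t ∈ Ioo 0 T, ∀ x ∈ Ioo l₁ l₂, -C ≤ c t x)
    (hu : ContDiffOn ℝ 1 (fun p : ℝ × ℝ ↦ u p.1 p.2) (Icc 0 T ×ˢ Icc l₁ l₂))
    (hsup : IsSupersolution l₁ l₂ d q T J c u) (hnn : ∀ t ∈ Icc 0 T, ∀ x ∈ Icc l₁ l₂, 0 ≤ u t x)
    {t s y : ℝ} (ht : 0 ≤ t) (hs : 0 ≤ s) (hsT : t + s ≤ T) (hy : l₁ ≤ y)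
    (hys : y + q * s ≤ l₂) :
    exp (-(d + C) * s) * u t y ≤ u (t + s) (y + q * s) := by
  have hBt : l₁ ≤ y - q * t + q * t := by linarith
  have hBs : y - q * t + q * (t + s) ≤ l₂ := by linarith
  have hmono := monotoneOn_exp_mul_characteristic_sub (K := d + C) (θ := 0) hq hu hsup ht hsT hBt
    hBs fun σ hσ ↦ ?_
  · have key := hmono ⟨le_rfl, by linarith⟩ ⟨by linarith, le_rfl⟩ (by linarith : t ≤ t + s)
    simp only [zero_mul, sub_zero, sub_add_cancel,
      show y - q * t + q * (t + s) = y + q * s by ring] at key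
    calc exp (-(d + C) * s) * u t y
        = exp (-(d + C) * (t + s)) * (exp ((d + C) * t) * u t y) := by
          rw [← mul_assoc, ← exp_add]; ring_nf
      _ ≤ exp (-(d + C) * (t + s)) * (exp ((d + C) * (t + s)) * u (t + s) (y + q * s)) := by
          gcongr
      _ = u (t + s) (y + q * s) := by
          rw [← mul_assoc, ← exp_add, neg_mul, neg_add_cancel, exp_zero, one_mul]
  · obtain ⟨hσT, hσx⟩ := characteristic_mem_Ioo_prod hq ht hsT hBt hBs hσ
    have hI : 0 ≤ ∫ z in Ioo l₁ l₂, J (y - q * t + q * σ - z) * u σ z :=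
      setIntegral_nonneg measurableSet_Ioo fun z hz ↦
        mul_nonneg (hJnn _) (hnn σ (Ioo_subset_Icc_self hσT) z (Ioo_subset_Icc_self hz))
    have hcσ := hc σ hσT _ hσx
    exact mul_nonneg (exp_pos _).le <| add_nonneg (mul_nonneg (by linarith)
      (hnn σ (Ioo_subset_Icc_self hσT) _ (Ioo_subset_Icc_self hσx))) (mul_nonneg hd hI)

theorem exp_mul_le_on_transported_Icc (hd : 0 ≤ d) (hq : 0 < q) (hJnn : ∀ x, 0 ≤ J x) {C : ℝ}
    (hC : 0 ≤ C) (hc : ∀ t ∈ Ioo 0 T, ∀ x ∈ Ioo l₁ l₂, -C ≤ c t x)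
    (hu : ContDiffOn ℝ 1 (fun p : ℝ × ℝ ↦ u p.1 p.2) (Icc 0 T ×ˢ Icc l₁ l₂))
    (hsup : IsSupersolution l₁ l₂ d q T J c u) (hnn : ∀ t ∈ Icc 0 T, ∀ x ∈ Icc l₁ l₂, 0 ≤ u t x)
    {t τ a w m σ y : ℝ} (ht : 0 ≤ t) (htτ : t + τ ≤ T) (ha : l₁ ≤ a) (haw : a + w + q * τ ≤ l₂)
    (hm : 0 ≤ m) (hmu : ∀ y ∈ Icc a (a + w), m ≤ u t y) (hσ : σ ∈ Icc t (t + τ))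
    (hy : y ∈ Icc (a + q * (σ - t)) (a + q * (σ - t) + w)) :
    exp (-(d + C) * τ) * m ≤ u σ y := by
  have hqσ : q * (σ - t) ≤ q * τ := mul_le_mul_of_nonneg_left (by linarith [hσ.2]) hq.le
  have hsrc : y - q * (σ - t) ∈ Icc a (a + w) := ⟨by linarith [hy.1], by linarith [hy.2]⟩
  have htr := exp_mul_le_along_characteristic hd hq hJnn hc hu hsup hnn ht (sub_nonneg.2 hσ.1)
    (by linarith [hσ.2]) (ha.trans hsrc.1) (by linarith [hy.2])
  rw [add_sub_cancel, sub_add_cancel] at htr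
  refine le_trans (mul_le_mul ?_ (hmu _ hsrc) hm (exp_pos _).le) htr
  exact exp_le_exp.2 (mul_le_mul_of_nonpos_left (by linarith [hσ.2]) (by linarith))

theorem pos_of_le_integral_along_characteristic (hd : 0 < d) (hq : 0 < q) {C : ℝ} (hC : 0 ≤ C)
    (hc : ∀ t ∈ Ioo 0 T, ∀ x ∈ Ioo l₁ l₂, -C ≤ c t x)
    (hu : ContDiffOn ℝ 1 (fun p : ℝ × ℝ ↦ u p.1 p.2) (Icc 0 T ×ˢ Icc l₁ l₂))
    (hsup : IsSupersolution l₁ l₂ d q T J c u) (hnn : ∀ t ∈ Icc 0 T, ∀ x ∈ Icc l₁ l₂, 0 ≤ u t x)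
    {B α β ι : ℝ} (hα : 0 ≤ α) (hαβ : α < β) (hβ : β ≤ T) (hBα : l₁ ≤ B + q * α)
    (hBβ : B + q * β ≤ l₂) (hι : 0 < ι)
    (hint : ∀ σ ∈ Ioo α β, ι ≤ ∫ y in Ioo l₁ l₂, J (B + q * σ - y) * u σ y) :
    0 < u β (B + q * β) := by
  have hmono := monotoneOn_exp_mul_characteristic_sub (K := d + C) (θ := d * ι) hq hu hsup hα hβ
    hBα hBβ fun σ hσ ↦ ?_
  · have key := hmono ⟨le_rfl, hαβ.le⟩ ⟨hαβ.le, le_rfl⟩ hαβ.le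
    have hα₀ := mul_nonneg (exp_pos ((d + C) * α)).le
      (hnn α ⟨hα, hαβ.le.trans hβ⟩ _ (characteristic_mem_Icc_prod hq.le hα hβ hBα hBβ
        ⟨le_rfl, hαβ.le⟩).2)
    have hgrowth : 0 < exp ((d + C) * β) * u β (B + q * β) := by
      nlinarith [mul_pos (mul_pos hd hι) (sub_pos.2 hαβ)]
    exact pos_of_mul_pos_right hgrowth (exp_pos _).le
  · obtain ⟨hσT, hσx⟩ := characteristic_mem_Ioo_prod hq hα hβ hBα hBβ hσ
    have hcσ := hc σ hσT _ hσx
    have hreaction : d * ι ≤ (d + C - d + c σ (B + q * σ)) * u σ (B + q * σ) +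
        d * ∫ y in Ioo l₁ l₂, J (B + q * σ - y) * u σ y := by
      have := mul_nonneg (by linarith : 0 ≤ d + C - d + c σ (B + q * σ))
        (hnn σ (Ioo_subset_Icc_self hσT) _ (Ioo_subset_Icc_self hσx))
      nlinarith [mul_le_mul_of_nonneg_left (hint σ hσ) hd.le]
    have hexp : 1 ≤ exp ((d + C) * σ) :=
      one_le_exp (mul_nonneg (by linarith) (hα.trans hσ.1.le))
    exact hreaction.trans (le_mul_of_one_le_left ((mul_nonneg hd.le hι.le).trans hreaction) hexp)

theorem pos_of_pos_on_Icc_of_short_step (hd : 0 < d) (hq : 0 < q) (hJc : Continuous J)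
    (hJnn : ∀ x, 0 ≤ J x) {j δ : ℝ} (hj : 0 < j) (hJδ : ∀ z, |z| ≤ δ → j ≤ J z) {C : ℝ}
    (hC : 0 ≤ C) (hc : ∀ t ∈ Ioo 0 T, ∀ x ∈ Ioo l₁ l₂, -C ≤ c t x)
    (hu : ContDiffOn ℝ 1 (fun p : ℝ × ℝ ↦ u p.1 p.2) (Icc 0 T ×ˢ Icc l₁ l₂))
    (hsup : IsSupersolution l₁ l₂ d q T J c u) (hnn : ∀ t ∈ Icc 0 T, ∀ x ∈ Icc l₁ l₂, 0 ≤ u t x)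
    {t τ a ℓ x : ℝ} (ht : 0 ≤ t) (hτ : 0 < τ) (htτ : t + τ ≤ T) (hqτ : q * τ ≤ ℓ / 2)
    (hℓδ : ℓ ≤ δ / 4) (ha : l₁ ≤ a) (haℓ : a + ℓ ≤ l₂) (hpos : ∀ y ∈ Icc a (a + ℓ), 0 < u t y)
    (hx : l₁ + q * τ ≤ x) (hx' : x ≤ l₂) (hxa : |x - a| ≤ δ / 2) :
    0 < u (t + τ) x := by
  have hqτ₀ : 0 < q * τ := mul_pos hq hτ
  obtain ⟨ym, hym, hmin⟩ := isCompact_Icc.exists_isMinOn (nonempty_Icc.2 (by linarith))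
    ((continuousOn_slice hu.continuousOn ⟨ht, by linarith⟩).mono
      (Icc_subset_Icc ha (by linarith : a + ℓ / 2 ≤ l₂)))
  have hmpos : 0 < u t ym := hpos ym ⟨hym.1, by linarith [hym.2]⟩
  set m := exp (-(d + C) * τ) * u t ym
  have hint : ∀ σ ∈ Ioo t (t + τ),
      ℓ / 2 * (j * m) ≤ ∫ y in Ioo l₁ l₂, J (x - q * (t + τ) + q * σ - y) * u σ y := by
    intro σ hσ
    have hσT : σ ∈ Icc 0 T := ⟨by linarith [hσ.1], by linarith [hσ.2]⟩
    have hqσ : q * (σ - t) ≤ q * τ := mul_le_mul_of_nonneg_left (by linarith [hσ.2]) hq.le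
    have hqσ₀ : 0 ≤ q * (σ - t) := mul_nonneg hq.le (by linarith [hσ.1])
    -- the cluster `[a, a + ℓ/2]`, transported to time `σ`, lies within `δ` of the point
    -- `x - q (t + τ - σ)` of the backward characteristic through `(t + τ, x)`
    refine mul_le_setIntegral_kernel_mul hJnn
      (integrableOn_kernel_mul hJc (continuousOn_slice hu.continuousOn hσT) _)
      (fun y hy ↦ hnn σ hσT y (Ioo_subset_Icc_self hy)) (by linarith) (by linarith) (by linarith)
      (mul_pos (exp_pos _) hmpos).le (fun y hy ↦ hJδ _ (abs_le.2 ⟨?_, ?_⟩)) fun y hy ↦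
        exp_mul_le_on_transported_Icc hd.le hq hJnn hC hc hu hsup hnn ht htτ ha (by linarith)
          hmpos.le (isMinOn_iff.1 hmin) (Ioo_subset_Icc_self hσ) (Ioo_subset_Icc_self hy)
    · linarith [neg_abs_le (x - a), hy.2]
    · linarith [le_abs_self (x - a), hy.1]
  have hpos := pos_of_le_integral_along_characteristic hd hq hC hc hu hsup hnn ht (by linarith)
    htτ (by linarith) (by linarith) (mul_pos (by linarith) (mul_pos hj (mul_pos (exp_pos _) hmpos)))
    hint
  rwa [sub_add_cancel] at hpos

theorem pos_of_isSupersolution (hd : 0 < d) (hq : 0 < q) (hJc : Continuous J)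
    (hJnn : ∀ x, 0 ≤ J x) (hJ0 : 0 < J 0) {C : ℝ} (hC : 0 ≤ C)
    (hc : ∀ t ∈ Ioo 0 T, ∀ x ∈ Ioo l₁ l₂, -C ≤ c t x)
    (hu : ContDiffOn ℝ 1 (fun p : ℝ × ℝ ↦ u p.1 p.2) (Icc 0 T ×ˢ Icc l₁ l₂))
    (hsup : IsSupersolution l₁ l₂ d q T J c u) (hnn : ∀ t ∈ Icc 0 T, ∀ x ∈ Icc l₁ l₂, 0 ≤ u t x)
    {x₀ : ℝ} (hx₀ : x₀ ∈ Icc l₁ l₂) (hu₀ : 0 < u 0 x₀) {t x : ℝ} (ht : t ∈ Ioc 0 T)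
    (hx : x ∈ Ioc l₁ l₂) : 0 < u t x := by
  obtain ⟨δ, hδ, hJδ⟩ : ∃ δ > 0, ∀ z, |z| ≤ δ → J 0 / 2 ≤ J z := by
    obtain ⟨δ, hδ, h⟩ := Metric.nhds_basis_closedBall.eventually_iff.1
      ((hJc.tendsto 0).eventually (eventually_gt_nhds (half_lt_self hJ0)))
    exact ⟨δ, hδ, fun z hz ↦ (h (by simpa using hz)).le⟩
  obtain ⟨a₀, ℓ₀, hℓ₀, ha₀, ha₀ℓ₀, hpos₀⟩ := exists_Icc_subset_pos
    (continuousOn_slice hu.continuousOn ⟨le_rfl, ht.1.le.trans ht.2⟩) (hx.1.trans_le hx.2) hx₀ hu₀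
  set ℓ := min (min ℓ₀ (δ / 4)) (min (a₀ - l₁) ((x - l₁) / 2))
  have hℓ : 0 < ℓ := lt_min (lt_min hℓ₀ (by linarith)) (lt_min (by linarith) (by linarith [hx.1]))
  have hℓℓ₀ : ℓ ≤ ℓ₀ := (min_le_left _ _).trans (min_le_left _ _)
  have hℓδ : ℓ ≤ δ / 4 := (min_le_left _ _).trans (min_le_right _ _)
  have hℓa₀ : ℓ ≤ a₀ - l₁ := (min_le_right _ _).trans (min_le_left _ _)
  have hℓx : ℓ ≤ (x - l₁) / 2 := (min_le_right _ _).trans (min_le_right _ _)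
  refine holds_of_small_steps (P := fun s a ↦ ∀ y ∈ Icc a (a + ℓ), 0 < u s y)
    (a₀ := a₀) (a₁ := x - ℓ) (convex_Icc (l₁ + ℓ) (l₂ - ℓ)) (div_pos hℓ (mul_pos two_pos hq))
    (div_pos hδ four_pos) ht.1 ⟨by linarith, by linarith⟩ ⟨by linarith, by linarith [hx.2]⟩
    (fun y hy ↦ hpos₀ y ⟨hy.1, by linarith [hy.2]⟩)
    (fun s τ a a' hs hτ hττ₀ hsτ ha ha' haa' hPa y hy ↦ ?_) x ⟨by linarith, by linarith⟩
  have hqτ : q * τ ≤ ℓ / 2 := by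
    rw [le_div_iff₀ (mul_pos two_pos hq)] at hττ₀; linarith
  have hshift := abs_le.1 haa'
  exact pos_of_pos_on_Icc_of_short_step hd hq hJc hJnn (half_pos hJ0) hJδ hC hc hu hsup hnn hs hτ
    (hsτ.trans ht.2) hqτ hℓδ (by linarith [ha.1]) (by linarith [ha.2]) hPa
    (by linarith [ha'.1, hy.1]) (by linarith [ha'.2, hy.2])
    (abs_le.2 ⟨by linarith [hy.1], by linarith [hy.2]⟩)

end Characteristics

theorem dirichlet_maximum_principle_general
    (l₁ l₂ d q T : ℝ) (J : ℝ → ℝ) (c u : ℝ → ℝ → ℝ) (u₀ : ℝ → ℝ)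
    (hd : 0 < d) (hq : 0 < q)
    -- condition (J)
    (hJc : Continuous J) (hJnn : ∀ x, 0 ≤ J x) (hJ0 : 0 < J 0)
    (hJint : MeasureTheory.Integrable J) (hJ1 : (∫ x, J x) = 1)
    -- c ∈ L∞((0,T)×Ω)
    (hc : ∃ C, ∀ t ∈ Set.Ioo 0 T, ∀ x ∈ Set.Ioo l₁ l₂, |c t x| ≤ C)
    -- u ∈ C¹([0,T]×[l₁,l₂])
    (hu : ContDiffOn ℝ 1 (fun p : ℝ × ℝ => u p.1 p.2) (Set.Icc 0 T ×ˢ Set.Icc l₁ l₂))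
    -- differential inequality
    (hineq : ∀ t ∈ Set.Ioo 0 T, ∀ x ∈ Set.Ioo l₁ l₂,
      deriv (fun s => u s x) t ≥
        d * ((∫ y in Set.Ioo l₁ l₂, J (x - y) * u t y) - u t x)
          - q * deriv (fun y => u t y) x + c t x * u t x)
    -- boundary condition
    (hbd : ∀ t ∈ Set.Ioo 0 T, 0 ≤ u t l₁)
    -- initial condition
    (hinit : ∀ x ∈ Set.Icc l₁ l₂, u 0 x = u₀ x)
    (hu₀nn : ∀ x ∈ Set.Icc l₁ l₂, 0 ≤ u₀ x) :
    (∀ t ∈ Set.Icc 0 T, ∀ x ∈ Set.Icc l₁ l₂, 0 ≤ u t x) ∧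
      ((∃ x ∈ Set.Icc l₁ l₂, u₀ x ≠ 0) →
        ∀ t ∈ Set.Ioc 0 T, ∀ x ∈ Set.Ioc l₁ l₂, 0 < u t x) := by
  obtain ⟨C, hC⟩ := hc
  have hnn := nonneg_of_isSupersolution hd.le hq hJc hJnn hJint hJ1
    (fun t ht x hx ↦ (le_abs_self _).trans (hC t ht x hx)) hu hineq hbd
    fun x hx ↦ hinit x hx ▸ hu₀nn x hx
  refine ⟨hnn, fun ⟨x₀, hx₀, hne⟩ t ht x hx ↦ ?_⟩
  have hc' : ∀ t ∈ Ioo 0 T, ∀ x ∈ Ioo l₁ l₂, -max C 0 ≤ c t x := fun t ht x hx ↦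
    (neg_le_neg ((hC t ht x hx).trans (le_max_left C 0))).trans (neg_abs_le _)
  exact pos_of_isSupersolution hd hq hJc hJnn hJ0 (le_max_right C 0) hc' hu hineq hnn hx₀
    (hinit x₀ hx₀ ▸ (hu₀nn x₀ hx₀).lt_of_ne' hne) ht hx

/-- **Maximum principle for the nonlocal Dirichlet advection problem.**
If `u ∈ C¹([0,T]×[l₁,l₂])` satisfies
`u_t ≥ d(∫_Ω J(x−y)u(t,y)dy − u(t,x)) − q u_x + c(t,x)u` on `(0,T)×Ω`,
`u(t,l₁) ≥ 0` and `u(0,·) = u₀ ≥ 0`, then `u ≥ 0` on `[0,T]×[l₁,l₂]`;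
moreover `u > 0` on `(0,T]×(l₁,l₂]` if `u₀ ≢ 0`. -/
theorem dirichlet_maximum_principle
    (l₁ l₂ d q T : ℝ) (J : ℝ → ℝ) (c u : ℝ → ℝ → ℝ) (u₀ : ℝ → ℝ)
    (hl : l₁ < l₂) (hd : 0 < d) (hq : 0 < q) (hT : 0 < T)
    -- condition (J)
    (hJc : Continuous J) (hJnn : ∀ x, 0 ≤ J x) (hJ0 : 0 < J 0)
    (hJint : MeasureTheory.Integrable J) (hJ1 : (∫ x, J x) = 1)
    -- condition (J1)
    (hJsymm : ∀ x, J (-x) = J x) (hJbdd : ∃ C, ∀ x, J x ≤ C)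
    -- c ∈ L∞((0,T)×Ω)
    (hc : ∃ C, ∀ t ∈ Set.Ioo 0 T, ∀ x ∈ Set.Ioo l₁ l₂, |c t x| ≤ C)
    -- u ∈ C¹([0,T]×[l₁,l₂])
    (hu : ContDiffOn ℝ 1 (fun p : ℝ × ℝ => u p.1 p.2) (Set.Icc 0 T ×ˢ Set.Icc l₁ l₂))
    -- differential inequality
    (hineq : ∀ t ∈ Set.Ioo 0 T, ∀ x ∈ Set.Ioo l₁ l₂,
      deriv (fun s => u s x) t ≥
        d * ((∫ y in Set.Ioo l₁ l₂, J (x - y) * u t y) - u t x)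
          - q * deriv (fun y => u t y) x + c t x * u t x)
    -- boundary condition
    (hbd : ∀ t ∈ Set.Ioo 0 T, 0 ≤ u t l₁)
    -- initial condition
    (hinit : ∀ x ∈ Set.Icc l₁ l₂, u 0 x = u₀ x)
    (hu₀nn : ∀ x ∈ Set.Icc l₁ l₂, 0 ≤ u₀ x) :
    (∀ t ∈ Set.Icc 0 T, ∀ x ∈ Set.Icc l₁ l₂, 0 ≤ u t x) ∧
      ((∃ x ∈ Set.Icc l₁ l₂, u₀ x ≠ 0) →
        ∀ t ∈ Set.Ioc 0 T, ∀ x ∈ Set.Ioc l₁ l₂, 0 < u t x) :=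
  dirichlet_maximum_principle_general l₁ l₂ d q T J c u u₀ hd hq hJc hJnn hJ0 hJint hJ1 hc hu hineq
    hbd hinit hu₀nn
end

section
/- Assume conditions (J) and (J1), let q > 0 and let c ∈ L∞(Ω). Suppose u ∈ C¹([l₁,l₂]) satisfies u ≥ 0 on [l₁,l₂], u ≢ 0, u(l₁) ≥ 0, and d∫_Ω J(x−y)(u(y) − u(x))dy − q u'(x) + c(x)u(x) ≤ 0 for all x ∈ Ω. Then u(x) > 0 for all x ∈ (l₁,l₂]. -/
/-!
At an interior zero `x₀` of `u`, the point `x₀` is a minimum, so `u'(x₀) = 0` and the inequality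
reduces to `d ∫_Ω J(x₀ - y) u(y) dy ≤ 0`. Since `J > 0` near `0`, this forces `u = 0` near `x₀`;
the zero set is therefore open in the connected interval `Ω`, and it is also closed, so `u ≢ 0`
gives `u > 0` on `Ω`. If `u(l₂) = 0`, letting `x → l₂⁻` in the inequality (the kernel integrals are
continuous in `x` because `J` is bounded) gives `d ∫_Ω J(l₂ - y) u(y) dy ≤ q u'(l₂) ≤ 0`, where
`u'(l₂) ≤ 0` because `l₂` is a minimum; this contradicts `u > 0` on `Ω`.
-/

open MeasureTheory Set Filter Topology

theorem setIntegral_pos_of_continuousOn {X : Type*} [TopologicalSpace X] [MeasurableSpace X]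
    [OpensMeasurableSpace X] {μ : Measure X} [μ.IsOpenPosMeasure] {s : Set X} {g : X → ℝ}
    (hs : IsOpen s) (hg : ContinuousOn g s) (hgi : IntegrableOn g s μ)
    (hnn : ∀ x ∈ s, 0 ≤ g x) {z : X} (hz : z ∈ s) (hgz : 0 < g z) :
    0 < ∫ x in s, g x ∂μ := by
  rw [setIntegral_pos_iff_support_of_nonneg_ae (ae_restrict_of_forall_mem hs.measurableSet hnn) hgi]
  have hpos : IsOpen (s ∩ g ⁻¹' Ioi 0) := hg.isOpen_inter_preimage hs isOpen_Ioi
  exact (hpos.measure_pos μ ⟨z, hz, hgz⟩).trans_le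
    (measure_mono fun x hx => ⟨hx.2.ne', hx.1⟩)

theorem continuous_setIntegral_comp_sub_mul {J g : ℝ → ℝ} {s : Set ℝ} {C : ℝ}
    (hJ : Continuous J) (hJC : ∀ x, ‖J x‖ ≤ C) (hg : IntegrableOn g s) :
    Continuous fun x => ∫ y in s, J (x - y) * g y :=
  continuous_of_dominated (bound := fun y => C * ‖g y‖)
    (fun x => ((hJ.comp (continuous_sub_left x)).aestronglyMeasurable).mul
      hg.aestronglyMeasurable)
    (fun x => .of_forall fun y => by rw [norm_mul]; gcongr; exact hJC _)
    (hg.norm.const_mul C)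
    (.of_forall fun y => (hJ.comp (continuous_sub_right y)).mul continuous_const)

theorem IsPreconnected.forall_ne_or_eqOn_of_eventually_eq {X Y : Type*} [TopologicalSpace X]
    [TopologicalSpace Y] [T1Space Y] {s : Set X} {f : X → Y} {a : Y}
    (hs : IsPreconnected s) (hso : IsOpen s) (hf : ContinuousOn f s)
    (hprop : ∀ x ∈ s, f x = a → ∀ᶠ y in 𝓝 x, f y = a) :
    (∀ x ∈ s, f x ≠ a) ∨ EqOn f (fun _ => a) s := by
  have hU : IsOpen (s ∩ f ⁻¹' {a}ᶜ) := hf.isOpen_inter_preimage hso isOpen_compl_singleton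
  have hV : IsOpen {x | ∀ᶠ y in 𝓝 x, f y = a} := isOpen_setOfPred_eventually_nhds
  have hdisj : Disjoint (s ∩ f ⁻¹' {a}ᶜ) {x | ∀ᶠ y in 𝓝 x, f y = a} :=
    disjoint_left.2 fun x hx hxV => hx.2 hxV.self_of_nhds
  have hcover : s ⊆ (s ∩ f ⁻¹' {a}ᶜ) ∪ {x | ∀ᶠ y in 𝓝 x, f y = a} := fun x hx =>
    (em (f x = a)).elim (fun h => .inr (hprop x hx h)) fun h => .inl ⟨hx, h⟩
  exact (hs.subset_or_subset hU hV hdisj hcover).imp (fun h x hx => (h hx).2)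
    fun h x hx => (h hx).self_of_nhds

theorem IsLocalMinOn.derivWithin_Icc_right_nonpos {a b : ℝ} {f : ℝ → ℝ} (hab : a < b)
    (hf : IsLocalMinOn f (Icc a b) b) : derivWithin f (Icc a b) b ≤ 0 := by
  have hcone : a - b ∈ posTangentConeAt (Icc a b) b :=
    sub_mem_posTangentConeAt_of_segment_subset (segment_symm ℝ b a ▸ segment_subset_Icc hab.le)
  have h := hf.fderivWithin_nonneg hcone
  rw [show a - b = (a - b) • (1 : ℝ) by simp, ContinuousLinearMap.map_smul,
    fderivWithin_derivWithin, smul_eq_mul] at h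
  nlinarith

section NonlocalAdvection

variable {l₁ l₂ d q C : ℝ} {J c u : ℝ → ℝ}

noncomputable def nonlocalAdvectionOp (l₁ l₂ d q : ℝ) (J c u : ℝ → ℝ) (x : ℝ) : ℝ :=
  d * (∫ y in Ioo l₁ l₂, J (x - y) * (u y - u x)) - q * deriv u x + c x * u x

theorem integrableOn_Ioo_comp_sub_mul (hJ : Continuous J) (hu : ContinuousOn u (Icc l₁ l₂))
    (x : ℝ) : IntegrableOn (fun y => J (x - y) * u y) (Ioo l₁ l₂) :=
  (((hJ.comp (continuous_sub_left x)).continuousOn.mul hu).integrableOn_Icc).mono_set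
    Ioo_subset_Icc_self

theorem nonlocal_lower_bound_le_deriv (hJ : Continuous J) (hu : ContinuousOn u (Icc l₁ l₂))
    (hunn : ∀ x ∈ Icc l₁ l₂, 0 ≤ u x) (hc : ∀ x ∈ Ioo l₁ l₂, |c x| ≤ C)
    (hineq : ∀ x ∈ Ioo l₁ l₂, nonlocalAdvectionOp l₁ l₂ d q J c u x ≤ 0)
    {x : ℝ} (hx : x ∈ Ioo l₁ l₂) :
    d * (∫ y in Ioo l₁ l₂, J (x - y) * u y) - (d * (∫ y in Ioo l₁ l₂, J (x - y)) + C) * u x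
      ≤ q * deriv u x := by
  have hsplit : ∫ y in Ioo l₁ l₂, J (x - y) * (u y - u x)
      = (∫ y in Ioo l₁ l₂, J (x - y) * u y) - (∫ y in Ioo l₁ l₂, J (x - y)) * u x := by
    simp_rw [mul_sub]
    rw [integral_sub (integrableOn_Ioo_comp_sub_mul hJ hu x), integral_mul_const]
    simpa using
      (integrableOn_Ioo_comp_sub_mul (u := fun _ => 1) hJ continuousOn_const x).mul_const (u x)
  have hcu : -C * u x ≤ c x * u x :=
    mul_le_mul_of_nonneg_right (neg_le_of_abs_le (hc x hx)) (hunn x (Ioo_subset_Icc_self hx))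
  have h := hineq x hx
  rw [nonlocalAdvectionOp, hsplit] at h
  linarith

theorem eventually_eq_zero_of_setIntegral_nonpos (hJ : Continuous J) (hJnn : ∀ x, 0 ≤ J x)
    (hJ0 : 0 < J 0) (hu : ContinuousOn u (Icc l₁ l₂)) (hunn : ∀ x ∈ Icc l₁ l₂, 0 ≤ u x) {x : ℝ}
    (hI : ∫ y in Ioo l₁ l₂, J (x - y) * u y ≤ 0) : ∀ᶠ z in 𝓝[Ioo l₁ l₂] x, u z = 0 := by
  have hJx : ∀ᶠ z in 𝓝 x, 0 < J (x - z) := by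
    have := (hJ.comp (continuous_sub_left x)).tendsto x
    rw [Function.comp_apply, sub_self] at this
    exact this.eventually (lt_mem_nhds hJ0)
  filter_upwards [self_mem_nhdsWithin, nhdsWithin_le_nhds hJx] with z hz hJz
  by_contra huz
  have huz' : 0 < u z := (hunn z (Ioo_subset_Icc_self hz)).lt_of_ne' huz
  refine hI.not_gt (setIntegral_pos_of_continuousOn isOpen_Ioo ?_
    (integrableOn_Ioo_comp_sub_mul hJ hu x) (fun y hy => ?_) hz (mul_pos hJz huz'))
  · exact ((hJ.comp (continuous_sub_left x)).continuousOn.mul hu).mono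
      Ioo_subset_Icc_self
  · exact mul_nonneg (hJnn _) (hunn y (Ioo_subset_Icc_self hy))

theorem setIntegral_nonpos_of_interior_zero (hd : 0 < d) (hJ : Continuous J)
    (hu : ContinuousOn u (Icc l₁ l₂)) (hunn : ∀ x ∈ Icc l₁ l₂, 0 ≤ u x)
    (hc : ∀ x ∈ Ioo l₁ l₂, |c x| ≤ C)
    (hineq : ∀ x ∈ Ioo l₁ l₂, nonlocalAdvectionOp l₁ l₂ d q J c u x ≤ 0)
    {x : ℝ} (hx : x ∈ Ioo l₁ l₂) (hux : u x = 0) :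
    ∫ y in Ioo l₁ l₂, J (x - y) * u y ≤ 0 := by
  have hmin : IsLocalMin u x := by
    filter_upwards [Icc_mem_nhds hx.1 hx.2] with y hy
    rw [hux]
    exact hunn y hy
  have h := nonlocal_lower_bound_le_deriv hJ hu hunn hc hineq hx
  rw [hmin.deriv_eq_zero, hux] at h
  nlinarith

theorem setIntegral_nonpos_of_right_zero (hl : l₁ < l₂) (hd : 0 < d) (hq : 0 ≤ q)
    (hJ : Continuous J) {CJ : ℝ} (hJb : ∀ x, ‖J x‖ ≤ CJ) (hu : ContDiffOn ℝ 1 u (Icc l₁ l₂))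
    (hunn : ∀ x ∈ Icc l₁ l₂, 0 ≤ u x) (hc : ∀ x ∈ Ioo l₁ l₂, |c x| ≤ C)
    (hineq : ∀ x ∈ Ioo l₁ l₂, nonlocalAdvectionOp l₁ l₂ d q J c u x ≤ 0)
    (hul : u l₂ = 0) :
    ∫ y in Ioo l₁ l₂, J (l₂ - y) * u y ≤ 0 := by
  have hl₂ : l₂ ∈ Icc l₁ l₂ := right_mem_Icc.2 hl.le
  have hIoo : 𝓝[Ioo l₁ l₂] l₂ ≤ 𝓝[Icc l₁ l₂] l₂ := nhdsWithin_mono _ Ioo_subset_Icc_self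
  have := right_nhdsWithin_Ioo_neBot hl
  have hI := continuous_setIntegral_comp_sub_mul hJ hJb (hu.continuousOn.integrableOn_Icc.mono_set
    Ioo_subset_Icc_self)
  have hK := continuous_setIntegral_comp_sub_mul (g := fun _ => 1) (s := Ioo l₁ l₂) hJ hJb
    (integrableOn_const measure_Ioo_lt_top.ne)
  simp only [mul_one] at hK
  have hlower : Tendsto (fun x => d * (∫ y in Ioo l₁ l₂, J (x - y) * u y)
      - (d * (∫ y in Ioo l₁ l₂, J (x - y)) + C) * u x) (𝓝[Ioo l₁ l₂] l₂)
      (𝓝 (d * ∫ y in Ioo l₁ l₂, J (l₂ - y) * u y)) := by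
    have hcont : ContinuousWithinAt (fun x => d * (∫ y in Ioo l₁ l₂, J (x - y) * u y)
        - (d * (∫ y in Ioo l₁ l₂, J (x - y)) + C) * u x) (Icc l₁ l₂) l₂ :=
      (hI.continuousWithinAt.const_mul d).sub
        (((hK.continuousWithinAt.const_mul d).add_const C).mul (hu.continuousOn l₂ hl₂))
    simpa only [hul, mul_zero, sub_zero] using hcont.tendsto.mono_left hIoo
  have hderiv : Tendsto (fun x => q * deriv u x) (𝓝[Ioo l₁ l₂] l₂)
      (𝓝 (q * derivWithin u (Icc l₁ l₂) l₂)) := by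
    refine (((hu.continuousOn_derivWithin (uniqueDiffOn_Icc hl) le_rfl) l₂ hl₂).tendsto.mono_left
      hIoo).const_mul q |>.congr' ?_
    filter_upwards [self_mem_nhdsWithin] with x hx
    rw [derivWithin_of_mem_nhds (Icc_mem_nhds hx.1 hx.2)]
  have hle := le_of_tendsto_of_tendsto hlower hderiv
    (eventually_nhdsWithin_of_forall fun x hx => nonlocal_lower_bound_le_deriv hJ hu.continuousOn
      hunn hc hineq hx)
  have hmin : IsMinOn u (Icc l₁ l₂) l₂ := fun x hx =>
    (hul ▸ hunn x hx : u l₂ ≤ u x)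
  nlinarith [hmin.localize.derivWithin_Icc_right_nonpos hl]

end NonlocalAdvection

theorem stationary_strong_maximum_principle_general
    (l₁ l₂ d q : ℝ) (J c u : ℝ → ℝ)
    (hl : l₁ < l₂) (hd : 0 < d) (hq : 0 < q)
    -- condition (J)
    (hJc : Continuous J) (hJnn : ∀ x, 0 ≤ J x) (hJ0 : 0 < J 0)
    -- condition (J1)
    (hJbdd : ∃ C, ∀ x, J x ≤ C)
    -- c ∈ L∞(Ω)
    (hc : ∃ C, ∀ x ∈ Set.Ioo l₁ l₂, |c x| ≤ C)
    -- u ∈ C¹([l₁,l₂]), u ≥ 0, u ≢ 0, u(l₁) ≥ 0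
    (huC1 : ContDiffOn ℝ 1 u (Set.Icc l₁ l₂))
    (hunn : ∀ x ∈ Set.Icc l₁ l₂, 0 ≤ u x)
    (hune : ∃ x ∈ Set.Icc l₁ l₂, u x ≠ 0)
    -- differential inequality
    (hineq : ∀ x ∈ Set.Ioo l₁ l₂,
      d * (∫ y in Set.Ioo l₁ l₂, J (x - y) * (u y - u x)) - q * deriv u x
        + c x * u x ≤ 0) :
    ∀ x ∈ Set.Ioc l₁ l₂, 0 < u x := by
  obtain ⟨C, hC⟩ := hc
  obtain ⟨CJ, hCJ⟩ := hJbdd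
  have hJb : ∀ x, ‖J x‖ ≤ CJ := fun x => (Real.norm_of_nonneg (hJnn x)).trans_le (hCJ x)
  have hu := huC1.continuousOn
  have hzero_spreads : ∀ x ∈ Ioo l₁ l₂, u x = 0 → ∀ᶠ y in 𝓝 x, u y = 0 := fun x hx hux =>
    isOpen_Ioo.nhdsWithin_eq hx ▸ eventually_eq_zero_of_setIntegral_nonpos hJc hJnn hJ0 hu hunn
      (setIntegral_nonpos_of_interior_zero hd hJc hu hunn hC hineq hx hux)
  have hinterior : ∀ x ∈ Ioo l₁ l₂, 0 < u x := by
    rcases isPreconnected_Ioo.forall_ne_or_eqOn_of_eventually_eq isOpen_Ioo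
      (hu.mono Ioo_subset_Icc_self) hzero_spreads with hne | hzero
    · exact fun x hx => (hunn x (Ioo_subset_Icc_self hx)).lt_of_ne' (hne x hx)
    · obtain ⟨w, hw, huw⟩ := hune
      exact absurd (hzero.of_subset_closure hu continuousOn_const Ioo_subset_Icc_self
        (closure_Ioo hl.ne).ge hw) huw
  intro x hx
  rcases hx.2.eq_or_lt with rfl | hlt
  · refine (hunn x (right_mem_Icc.2 hl.le)).lt_of_ne' fun hux => ?_
    have := right_nhdsWithin_Ioo_neBot hl
    obtain ⟨y, hy0, hypos⟩ := ((eventually_eq_zero_of_setIntegral_nonpos hJc hJnn hJ0 hu hunn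
      (setIntegral_nonpos_of_right_zero hl hd hq.le hJc hJb huC1 hunn hC hineq hux)).and
      (eventually_nhdsWithin_of_forall hinterior)).exists
    exact hypos.ne' hy0
  · exact hinterior x ⟨hx.1, hlt⟩

/-- **Strong maximum principle for the stationary nonlocal Neumann advection
operator.** If `u ∈ C¹([l₁,l₂])` is nonnegative, not identically zero,
`u(l₁) ≥ 0`, and `d∫_Ω J(x−y)(u(y) − u(x))dy − q u'(x) + c(x)u(x) ≤ 0` on `Ω`,
then `u > 0` on `(l₁,l₂]`. -/
theorem stationary_strong_maximum_principle
    (l₁ l₂ d q : ℝ) (J c u : ℝ → ℝ)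
    (hl : l₁ < l₂) (hd : 0 < d) (hq : 0 < q)
    -- condition (J)
    (hJc : Continuous J) (hJnn : ∀ x, 0 ≤ J x) (hJ0 : 0 < J 0)
    (hJint : MeasureTheory.Integrable J) (hJ1 : (∫ x, J x) = 1)
    -- condition (J1)
    (hJsymm : ∀ x, J (-x) = J x) (hJbdd : ∃ C, ∀ x, J x ≤ C)
    -- c ∈ L∞(Ω)
    (hc : ∃ C, ∀ x ∈ Set.Ioo l₁ l₂, |c x| ≤ C)
    -- u ∈ C¹([l₁,l₂]), u ≥ 0, u ≢ 0, u(l₁) ≥ 0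
    (huC1 : ContDiffOn ℝ 1 u (Set.Icc l₁ l₂))
    (hunn : ∀ x ∈ Set.Icc l₁ l₂, 0 ≤ u x)
    (hune : ∃ x ∈ Set.Icc l₁ l₂, u x ≠ 0)
    (hul : 0 ≤ u l₁)
    -- differential inequality
    (hineq : ∀ x ∈ Set.Ioo l₁ l₂,
      d * (∫ y in Set.Ioo l₁ l₂, J (x - y) * (u y - u x)) - q * deriv u x
        + c x * u x ≤ 0) :
    ∀ x ∈ Set.Ioc l₁ l₂, 0 < u x :=
  stationary_strong_maximum_principle_general l₁ l₂ d q J c u hl hd hq hJc hJnn hJ0 hJbdd hc huC1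
    hunn hune hineq
end

section
/- Assume conditions (J) and (J1) and let h be a KPP nonlinearity. Then the Neumann stationary problem d∫_Ω J(x−y)(U(y) − U(x))dy − q U'(x) + U(x)h(x,U(x)) = 0 on Ω with U(l₁) = 0 has at most one nontrivial solution: if U₁ and U₂ are nontrivial solutions, then U₁ ≡ U₂ on [l₁,l₂]. -/
open MeasureTheory

/-- `U` is a nontrivial solution of the Neumann stationary problem
`d∫_Ω J(x−y)(U(y) − U(x))dy − q U'(x) + U(x)h(x,U(x)) = 0` on `Ω` with
`U(l₁) = 0`: bounded, continuous, nonnegative on `[l₁,l₂]`, differentiable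
on `Ω`, and not identically zero. -/
def NeumannStatSol (l₁ l₂ d q : ℝ) (J : ℝ → ℝ) (h : ℝ → ℝ → ℝ) (U : ℝ → ℝ) : Prop :=
  ContinuousOn U (Set.Icc l₁ l₂) ∧
  (∃ C, ∀ x ∈ Set.Icc l₁ l₂, |U x| ≤ C) ∧
  (∀ x ∈ Set.Icc l₁ l₂, 0 ≤ U x) ∧
  (∀ x ∈ Set.Ioo l₁ l₂, DifferentiableAt ℝ U x) ∧
  (∃ x ∈ Set.Icc l₁ l₂, U x ≠ 0) ∧
  U l₁ = 0 ∧
  ∀ x ∈ Set.Ioo l₁ l₂,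
    d * (∫ y in Set.Ioo l₁ l₂, J (x - y) * (U y - U x)) - q * deriv U x
      + U x * h x (U x) = 0

/-!
A solution `U` has a one-sided derivative at every point of `[l₁, l₂]`, read off from the
equation. At a zero `p > l₁` of `U ≥ 0` this derivative is `(d / q) ∫ J (p - y) U y dy ≥ 0`,
while the minimum of `U` at `p` forces it to be `≤ 0`; so `U` vanishes wherever `J (p - ·) > 0`,
zeros spread, and a nontrivial solution is positive on `(l₁, l₂]` with `U'(l₁) > 0`.

Given two solutions `U, V`, the ratio `V / U` is bounded near `l₁` (both vanish there and
`U'(l₁) > 0`), so `K := sup V / U` is finite. If `K > 1`, then `W := K U - V ≥ 0` and at a zero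
`p > l₁` of `W` the reaction terms give `K U h(U) - V h(V) = V (h(U) - h(V)) > 0` because
`V = K U > U`, so `W'(p) > 0` against the minimum at `p`. Hence `W > 0` on `(l₁, l₂]`,
`W'(l₁) > 0`, and `W ≥ ε U` for some `ε > 0`, contradicting the choice of `K`. So `V ≤ U`, and
uniqueness follows by symmetry.
-/

open Set Filter Topology

theorem hasDerivWithinAt_Icc_of_hasDerivAt {f f' : ℝ → ℝ} {a b x : ℝ} (hab : a < b)
    (hf : ContinuousOn f (Icc a b)) (hderiv : ∀ y ∈ Ioo a b, HasDerivAt f (f' y) y)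
    (hf' : ContinuousOn f' (Icc a b)) (hx : x ∈ Icc a b) :
    HasDerivWithinAt f (f' x) (Icc a b) x := by
  rw [hasDerivWithinAt_iff_hasFDerivWithinAt, ← closure_Ioo hab.ne]
  refine hasFDerivWithinAt_closure_of_tendsto_fderiv
    (fun y hy => (hderiv y hy).differentiableAt.differentiableWithinAt) (convex_Ioo a b)
    isOpen_Ioo (fun y hy => (hf y (closure_Ioo hab.ne ▸ hy)).mono Ioo_subset_Icc_self) ?_
  have hlim : Tendsto f' (𝓝[Ioo a b] x) (𝓝 (f' x)) := (hf' x hx).mono Ioo_subset_Icc_self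
  refine ((ContinuousLinearMap.toSpanSingletonLIE ℝ ℝ).continuous.tendsto _ |>.comp hlim).congr' ?_
  filter_upwards [self_mem_nhdsWithin] with y hy
  exact (hderiv y hy).hasFDerivAt.fderiv.symm

theorem IsMinOn.hasDerivWithinAt_nonpos {f : ℝ → ℝ} {a b p L : ℝ} (hmin : IsMinOn f (Icc a b) p)
    (hp : p ∈ Ioc a b) (hf : HasDerivWithinAt f L (Icc a b) p) : L ≤ 0 := by
  have hcone : a - p ∈ posTangentConeAt (Icc a b) p :=
    mem_posTangentConeAt_of_segment_subset <| by
      rw [add_sub_cancel, segment_symm, segment_eq_Icc hp.1.le]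
      exact Icc_subset_Icc_right hp.2
  have := hmin.localize.hasFDerivWithinAt_nonneg hf.hasFDerivWithinAt hcone
  simp only [ContinuousLinearMap.toSpanSingleton_apply, smul_eq_mul] at this
  nlinarith [hp.1]

theorem exists_forall_le_mul_of_hasDerivWithinAt {f g : ℝ → ℝ} {a b A B : ℝ}
    (hf : ContinuousOn f (Icc a b)) (hg : ContinuousOn g (Icc a b))
    (hfpos : ∀ x ∈ Ioc a b, 0 < f x) (hfa : f a = 0) (hga : g a = 0)
    (hf' : HasDerivWithinAt f A (Icc a b) a) (hA : A ≠ 0)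
    (hg' : HasDerivWithinAt g B (Icc a b) a) :
    ∃ K, ∀ x ∈ Ioc a b, g x ≤ K * f x := by
  classical
  -- `g / f` extends continuously to `a` by the ratio of slopes `B / A`, hence is bounded
  let r := Function.update (fun x => g x / f x) a (B / A)
  have hr : ContinuousOn r (Icc a b) := by
    intro x hx
    rcases eq_or_ne x a with rfl | hxa
    · rw [continuousWithinAt_update_same, Icc_sdiff_left]
      rw [hasDerivWithinAt_iff_tendsto_slope, Icc_sdiff_left] at hf' hg'
      refine (hg'.div hf' hA).congr' ?_
      filter_upwards [self_mem_nhdsWithin] with y hy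
      have : y - x ≠ 0 := sub_ne_zero.2 hy.1.ne'
      simp only [Pi.div_apply, slope_def_field, hfa, hga, sub_zero]
      field_simp
    · rw [continuousWithinAt_update_of_ne hxa]
      exact (hg x hx).div (hf x hx) (hfpos x ⟨hx.1.lt_of_ne' hxa, hx.2⟩).ne'
  obtain ⟨K, hK⟩ := isCompact_Icc.bddAbove_image hr
  refine ⟨K, fun x hx => ?_⟩
  have hrx : r x ≤ K := hK (mem_image_of_mem r (Ioc_subset_Icc_self hx))
  rw [show r x = g x / f x from Function.update_of_ne hx.1.ne' _ _] at hrx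
  exact (div_le_iff₀ (hfpos x hx)).1 hrx

theorem eqOn_zero_of_setIntegral_Ioo_eq_zero {g : ℝ → ℝ} {a b : ℝ} (hab : a < b)
    (hg : ContinuousOn g (Icc a b)) (hnn : ∀ y ∈ Icc a b, 0 ≤ g y)
    (h0 : ∫ y in Ioo a b, g y = 0) : EqOn g 0 (Icc a b) := by
  rw [← integral_Icc_eq_integral_Ioo, setIntegral_eq_zero_iff_of_nonneg_ae
    (ae_restrict_of_forall_mem measurableSet_Icc hnn) hg.integrableOn_Icc] at h0
  exact Measure.eqOn_Icc_of_ae_eq _ hab.ne h0 hg continuousOn_const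

noncomputable def dispersal (l₁ l₂ : ℝ) (J U : ℝ → ℝ) (x : ℝ) : ℝ :=
  ∫ y in Ioo l₁ l₂, J (x - y) * (U y - U x)

section Dispersal

variable {l₁ l₂ : ℝ} {J U V : ℝ → ℝ}

theorem dispersal_of_eq_zero {x : ℝ} (hx : U x = 0) :
    dispersal l₁ l₂ J U x = ∫ y in Ioo l₁ l₂, J (x - y) * U y := by
  simp only [dispersal, hx, sub_zero]

theorem integrableOn_dispersal_integrand (hJ : Continuous J) (hU : ContinuousOn U (Icc l₁ l₂))
    (x : ℝ) : IntegrableOn (fun y => J (x - y) * (U y - U x)) (Ioo l₁ l₂) :=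
  ((hJ.comp (continuous_sub_left x)).continuousOn.mul
    (hU.sub continuousOn_const)).integrableOn_Icc.mono_set Ioo_subset_Icc_self

theorem dispersal_mul_sub (hJ : Continuous J) (hU : ContinuousOn U (Icc l₁ l₂))
    (hV : ContinuousOn V (Icc l₁ l₂)) (K x : ℝ) :
    dispersal l₁ l₂ J (fun y => K * U y - V y) x
      = K * dispersal l₁ l₂ J U x - dispersal l₁ l₂ J V x := by
  rw [dispersal, dispersal, dispersal, ← integral_const_mul, ← integral_sub
    ((integrableOn_dispersal_integrand hJ hU x).const_mul K)
    (integrableOn_dispersal_integrand hJ hV x)]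
  congr 1 with y
  ring

theorem continuousOn_dispersal (hl : l₁ ≤ l₂) (hJ : Continuous J)
    (hU : ContinuousOn U (Icc l₁ l₂)) : ContinuousOn (dispersal l₁ l₂ J U) (Icc l₁ l₂) := by
  set Ū : ℝ → ℝ := fun y => U (projIcc l₁ l₂ hl y)
  have hŪ : Continuous Ū :=
    hU.comp_continuous (continuous_subtype_val.comp continuous_projIcc) fun y =>
      (projIcc l₁ l₂ hl y).2
  have hŪU : ∀ y ∈ Icc l₁ l₂, Ū y = U y := fun y hy => by simp [Ū, projIcc_of_mem hl hy]
  have hcont : Continuous (dispersal l₁ l₂ J Ū) := by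
    show Continuous fun x => ∫ y in Ioo l₁ l₂, J (x - y) * (Ū y - Ū x)
    simp_rw [← integral_Icc_eq_integral_Ioo]
    exact continuous_parametric_integral_of_continuous (by fun_prop) isCompact_Icc
  refine hcont.continuousOn.congr fun x hx => ?_
  refine setIntegral_congr_fun measurableSet_Ioo fun y hy => ?_
  simp only [hŪU x hx, hŪU y (Ioo_subset_Icc_self hy)]

theorem eventually_eq_zero_of_dispersal_nonpos (hl : l₁ < l₂) (hJ : Continuous J)
    (hJnn : ∀ z, 0 ≤ J z) (hJ0 : 0 < J 0) (hU : ContinuousOn U (Icc l₁ l₂))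
    (hUnn : ∀ y ∈ Icc l₁ l₂, 0 ≤ U y) {p : ℝ} (hp : U p = 0)
    (hdisp : dispersal l₁ l₂ J U p ≤ 0) : ∀ᶠ y in 𝓝[Icc l₁ l₂] p, U y = 0 := by
  rw [dispersal_of_eq_zero hp] at hdisp
  have hnn : ∀ y ∈ Icc l₁ l₂, 0 ≤ J (p - y) * U y := fun y hy => mul_nonneg (hJnn _) (hUnn y hy)
  have hzero := eqOn_zero_of_setIntegral_Ioo_eq_zero hl
    ((hJ.comp (continuous_sub_left p)).continuousOn.mul hU) hnn
    (hdisp.antisymm (setIntegral_nonneg measurableSet_Ioo fun y hy =>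
      hnn y (Ioo_subset_Icc_self hy)))
  have hJpos : ∀ᶠ y in 𝓝 p, 0 < J (p - y) :=
    ((hJ.comp (continuous_sub_left p)).tendsto' p (J 0) (by simp)).eventually (lt_mem_nhds hJ0)
  filter_upwards [self_mem_nhdsWithin, nhdsWithin_le_nhds hJpos] with y hy hJy
  exact (mul_eq_zero.1 (hzero hy)).resolve_left hJy.ne'

theorem dispersal_pos_of_pos_on_Ioc (hl : l₁ < l₂) (hJ : Continuous J)
    (hJnn : ∀ z, 0 ≤ J z) (hJ0 : 0 < J 0) (hU : ContinuousOn U (Icc l₁ l₂))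
    (hUpos : ∀ y ∈ Ioc l₁ l₂, 0 < U y) (hU0 : U l₁ = 0) : 0 < dispersal l₁ l₂ J U l₁ := by
  have hUnn : ∀ y ∈ Icc l₁ l₂, 0 ≤ U y := fun y hy =>
    hy.1.eq_or_lt.elim (fun h => h ▸ hU0.ge) fun h => (hUpos y ⟨h, hy.2⟩).le
  by_contra! hdisp
  have hzero := (eventually_eq_zero_of_dispersal_nonpos hl hJ hJnn hJ0 hU hUnn hU0
    hdisp).filter_mono (nhdsWithin_mono _ Ioc_subset_Icc_self)
  have : (𝓝[Ioc l₁ l₂] l₁).NeBot := by rw [nhdsWithin_Ioc_eq_nhdsGT hl]; infer_instance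
  obtain ⟨y, hy0, hy⟩ := (hzero.and self_mem_nhdsWithin).exists
  exact (hUpos y hy).ne' hy0

end Dispersal

/-- The value of `U'` dictated by the stationary equation. -/
noncomputable def neumannDeriv (l₁ l₂ d q : ℝ) (J : ℝ → ℝ) (h : ℝ → ℝ → ℝ) (U : ℝ → ℝ)
    (x : ℝ) : ℝ :=
  (d * dispersal l₁ l₂ J U x + U x * h x (U x)) / q

namespace NeumannStatSol

variable {l₁ l₂ d q : ℝ} {J : ℝ → ℝ} {h : ℝ → ℝ → ℝ} {U V : ℝ → ℝ}

theorem hasDerivWithinAt (hl : l₁ < l₂) (hq : q ≠ 0) (hJ : Continuous J)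
    (hh : ContinuousOn (fun p : ℝ × ℝ => h p.1 p.2) (Icc l₁ l₂ ×ˢ Ici 0))
    (hU : NeumannStatSol l₁ l₂ d q J h U) :
    ∀ x ∈ Icc l₁ l₂, HasDerivWithinAt U (neumannDeriv l₁ l₂ d q J h U x) (Icc l₁ l₂) x := by
  obtain ⟨hUc, -, hUnn, hUd, -, -, hUeq⟩ := hU
  refine fun x hx => hasDerivWithinAt_Icc_of_hasDerivAt hl hUc (fun y hy => ?_) ?_ hx
  · refine (hUd y hy).hasDerivAt.congr_deriv ?_
    rw [neumannDeriv, dispersal, eq_div_iff hq]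
    linear_combination -hUeq y hy
  · exact ((continuousOn_const.mul (continuousOn_dispersal hl.le hJ hUc)).add
      (hUc.mul (hh.comp (continuousOn_id.prodMk hUc) fun y hy => ⟨hy, hUnn y hy⟩))).div_const q

theorem pos (hl : l₁ < l₂) (hd : 0 < d) (hq : 0 < q) (hJ : Continuous J) (hJnn : ∀ z, 0 ≤ J z)
    (hJ0 : 0 < J 0) (hh : ContinuousOn (fun p : ℝ × ℝ => h p.1 p.2) (Icc l₁ l₂ ×ˢ Ici 0))
    (hU : NeumannStatSol l₁ l₂ d q J h U) : ∀ x ∈ Ioc l₁ l₂, 0 < U x := by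
  have hU' := hU.hasDerivWithinAt hl hq.ne' hJ hh
  obtain ⟨hUc, -, hUnn, -, ⟨x₀, hx₀, hUx₀⟩, hU0, -⟩ := hU
  have hzero : ∀ x ∈ Ioc l₁ l₂, U x = 0 → ∀ᶠ y in 𝓝[Ioc l₁ l₂] x, U y = 0 := by
    intro x hx hUx
    have hmin : IsMinOn U (Icc l₁ l₂) x := fun y hy => by simp [hUx, hUnn y hy]
    have hslope := hmin.hasDerivWithinAt_nonpos hx (hU' x (Ioc_subset_Icc_self hx))
    rw [neumannDeriv, hUx, zero_mul, add_zero] at hslope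
    have hdisp : dispersal l₁ l₂ J U x ≤ 0 :=
      nonpos_of_mul_nonpos_right ((div_le_iff₀ hq).1 hslope |>.trans_eq (zero_mul q)) hd
    exact (eventually_eq_zero_of_dispersal_nonpos hl hJ hJnn hJ0 hUc hUnn hUx hdisp).filter_mono
      (nhdsWithin_mono _ Ioc_subset_Icc_self)
  have hnonzero : ∀ x ∈ Ioc l₁ l₂, U x ≠ 0 → ∀ᶠ y in 𝓝[Ioc l₁ l₂] x, U y ≠ 0 := fun x hx hUx =>
    ((hUc x (Ioc_subset_Icc_self hx)).mono Ioc_subset_Icc_self).eventually_ne hUx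
  have hx₀' : x₀ ∈ Ioc l₁ l₂ := ⟨hx₀.1.lt_of_ne (by rintro rfl; exact hUx₀ hU0), hx₀.2⟩
  intro x hx
  refine (hUnn x (Ioc_subset_Icc_self hx)).lt_of_ne' fun hUx => hUx₀ ?_
  refine (isPreconnected_Ioc.induction₂ (fun x y => U x = 0 ↔ U y = 0) (fun x hx => ?_)
    (fun _ _ _ _ _ _ => Iff.trans) (fun _ _ _ _ => Iff.symm) hx hx₀').1 hUx
  by_cases hUx : U x = 0
  · filter_upwards [hzero x hx hUx] with y hy using iff_of_true hUx hy
  · filter_upwards [hnonzero x hx hUx] with y hy using iff_of_false hUx hy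

theorem mul_neumannDeriv_sub (hJ : Continuous J) (hU : ContinuousOn U (Icc l₁ l₂))
    (hV : ContinuousOn V (Icc l₁ l₂)) (K x : ℝ) :
    K * neumannDeriv l₁ l₂ d q J h U x - neumannDeriv l₁ l₂ d q J h V x
      = (d * dispersal l₁ l₂ J (fun y => K * U y - V y) x
          + (K * U x * h x (U x) - V x * h x (V x))) / q := by
  rw [neumannDeriv, neumannDeriv, dispersal_mul_sub hJ hU hV]
  ring

theorem ne_mul_of_le_mul (hl : l₁ < l₂) (hd : 0 < d) (hq : 0 < q) (hJ : Continuous J)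
    (hJnn : ∀ z, 0 ≤ J z) (hJ0 : 0 < J 0)
    (hh : ContinuousOn (fun p : ℝ × ℝ => h p.1 p.2) (Icc l₁ l₂ ×ˢ Ici 0))
    (hhdec : ∀ x ∈ Icc l₁ l₂, StrictAntiOn (fun u => h x u) (Ici 0))
    (hU : NeumannStatSol l₁ l₂ d q J h U) (hV : NeumannStatSol l₁ l₂ d q J h V) {K : ℝ}
    (hK : 1 < K) (hle : ∀ x ∈ Icc l₁ l₂, V x ≤ K * U x) : ∀ p ∈ Ioc l₁ l₂, V p ≠ K * U p := by
  intro p hp hVp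
  have hp' := Ioc_subset_Icc_self hp
  have hUp : 0 < U p := hU.pos hl hd hq hJ hJnn hJ0 hh p hp
  have hW := ((hU.hasDerivWithinAt hl hq.ne' hJ hh p hp').const_mul K).sub
    (hV.hasDerivWithinAt hl hq.ne' hJ hh p hp')
  have hmin : IsMinOn (fun y => K * U y - V y) (Icc l₁ l₂) p := fun y hy => by
    show K * U p - V p ≤ K * U y - V y
    linarith [hle y hy]
  have hslope := hmin.hasDerivWithinAt_nonpos hp hW
  rw [mul_neumannDeriv_sub hJ hU.1 hV.1, ← hVp] at hslope
  have hdisp : 0 ≤ dispersal l₁ l₂ J (fun y => K * U y - V y) p := by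
    rw [dispersal_of_eq_zero (by simp only [hVp, sub_self])]
    exact setIntegral_nonneg measurableSet_Ioo fun y hy =>
      mul_nonneg (hJnn _) (sub_nonneg.2 (hle y (Ioo_subset_Icc_self hy)))
  have hUV : U p < V p := by rw [hVp]; nlinarith
  have hhUV : h p (V p) < h p (U p) :=
    hhdec p hp' (mem_Ici.2 hUp.le) (mem_Ici.2 (hUp.trans hUV).le) hUV
  have hpos : 0 < d * dispersal l₁ l₂ J (fun y => K * U y - V y) p
      + (V p * h p (U p) - V p * h p (V p)) := by
    nlinarith
  exact (div_pos hpos hq).not_ge hslope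

theorem exists_le_mul (hl : l₁ < l₂) (hd : 0 < d) (hq : 0 < q) (hJ : Continuous J)
    (hJnn : ∀ z, 0 ≤ J z) (hJ0 : 0 < J 0)
    (hh : ContinuousOn (fun p : ℝ × ℝ => h p.1 p.2) (Icc l₁ l₂ ×ˢ Ici 0))
    (hV : NeumannStatSol l₁ l₂ d q J h V) (hU : NeumannStatSol l₁ l₂ d q J h U) :
    ∃ K, ∀ x ∈ Ioc l₁ l₂, V x ≤ K * U x := by
  have hUpos := hU.pos hl hd hq hJ hJnn hJ0 hh
  have hU' := hU.hasDerivWithinAt hl hq.ne' hJ hh l₁ (left_mem_Icc.2 hl.le)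
  have hV' := hV.hasDerivWithinAt hl hq.ne' hJ hh l₁ (left_mem_Icc.2 hl.le)
  obtain ⟨hUc, -, -, -, -, hU0, -⟩ := hU
  obtain ⟨hVc, -, -, -, -, hV0, -⟩ := hV
  have hUslope : 0 < neumannDeriv l₁ l₂ d q J h U l₁ := by
    rw [neumannDeriv, hU0, zero_mul, add_zero]
    exact div_pos (mul_pos hd (dispersal_pos_of_pos_on_Ioc hl hJ hJnn hJ0 hUc hUpos hU0)) hq
  exact exists_forall_le_mul_of_hasDerivWithinAt hUc hVc hUpos hU0 hV0 hU' hUslope.ne' hV'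

theorem exists_le_sub_mul (hl : l₁ < l₂) (hd : 0 < d) (hq : 0 < q) (hJ : Continuous J)
    (hJnn : ∀ z, 0 ≤ J z) (hJ0 : 0 < J 0)
    (hh : ContinuousOn (fun p : ℝ × ℝ => h p.1 p.2) (Icc l₁ l₂ ×ˢ Ici 0))
    (hhdec : ∀ x ∈ Icc l₁ l₂, StrictAntiOn (fun u => h x u) (Ici 0))
    (hU : NeumannStatSol l₁ l₂ d q J h U) (hV : NeumannStatSol l₁ l₂ d q J h V) {K : ℝ}
    (hK : 1 < K) (hle : ∀ x ∈ Icc l₁ l₂, V x ≤ K * U x) :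
    ∃ ε > 0, ∀ x ∈ Ioc l₁ l₂, V x ≤ (K - ε) * U x := by
  have hUpos := hU.pos hl hd hq hJ hJnn hJ0 hh
  have hWpos : ∀ x ∈ Ioc l₁ l₂, 0 < K * U x - V x := fun x hx =>
    sub_pos.2 <| (hle x (Ioc_subset_Icc_self hx)).lt_of_ne <|
      ne_mul_of_le_mul hl hd hq hJ hJnn hJ0 hh hhdec hU hV hK hle x hx
  have hU' := hU.hasDerivWithinAt hl hq.ne' hJ hh l₁ (left_mem_Icc.2 hl.le)
  have hV' := hV.hasDerivWithinAt hl hq.ne' hJ hh l₁ (left_mem_Icc.2 hl.le)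
  obtain ⟨hUc, -, -, -, -, hU0, -⟩ := hU
  obtain ⟨hVc, -, -, -, -, hV0, -⟩ := hV
  have hWc : ContinuousOn (fun y => K * U y - V y) (Icc l₁ l₂) :=
    (continuousOn_const.mul hUc).sub hVc
  have hW0 : K * U l₁ - V l₁ = 0 := by rw [hU0, hV0, mul_zero, sub_zero]
  have hWslope : 0 < K * neumannDeriv l₁ l₂ d q J h U l₁ - neumannDeriv l₁ l₂ d q J h V l₁ := by
    rw [mul_neumannDeriv_sub hJ hUc hVc, hU0, hV0, mul_zero, zero_mul, sub_self, add_zero]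
    exact div_pos (mul_pos hd (dispersal_pos_of_pos_on_Ioc hl hJ hJnn hJ0 hWc hWpos hW0)) hq
  obtain ⟨C, hC⟩ := exists_forall_le_mul_of_hasDerivWithinAt hWc hUc hWpos hW0 hU0
    ((hU'.const_mul K).sub hV') hWslope.ne' hU'
  have hl₂ := right_mem_Ioc.2 hl
  have hCpos : 0 < C := by nlinarith [hC l₂ hl₂, hUpos l₂ hl₂, hWpos l₂ hl₂]
  refine ⟨C⁻¹, inv_pos.2 hCpos, fun x hx => ?_⟩
  have hUW : C⁻¹ * U x ≤ K * U x - V x := (inv_mul_le_iff₀ hCpos).2 (hC x hx)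
  linarith

theorem le (hl : l₁ < l₂) (hd : 0 < d) (hq : 0 < q) (hJ : Continuous J)
    (hJnn : ∀ z, 0 ≤ J z) (hJ0 : 0 < J 0)
    (hh : ContinuousOn (fun p : ℝ × ℝ => h p.1 p.2) (Icc l₁ l₂ ×ˢ Ici 0))
    (hhdec : ∀ x ∈ Icc l₁ l₂, StrictAntiOn (fun u => h x u) (Ici 0))
    (hV : NeumannStatSol l₁ l₂ d q J h V) (hU : NeumannStatSol l₁ l₂ d q J h U) :
    ∀ x ∈ Icc l₁ l₂, V x ≤ U x := by
  have hUpos := hU.pos hl hd hq hJ hJnn hJ0 hh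
  have ⟨_, _, hUnn, _, _, hU0, _⟩ := hU
  have ⟨_, _, _, _, _, hV0, _⟩ := hV
  obtain ⟨K₀, hK₀⟩ := hV.exists_le_mul hl hd hq hJ hJnn hJ0 hh hU
  set R := (fun x => V x / U x) '' Ioc l₁ l₂
  have hRne : R.Nonempty := (nonempty_Ioc.2 hl).image _
  have hRbdd : BddAbove R := ⟨K₀, by
    rintro _ ⟨x, hx, rfl⟩
    exact (div_le_iff₀ (hUpos x hx)).2 (hK₀ x hx)⟩
  set K := sSup R
  have hVK : ∀ x ∈ Icc l₁ l₂, V x ≤ K * U x := by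
    intro x hx
    rcases hx.1.eq_or_lt with rfl | hlt
    · simp only [hU0, hV0, mul_zero, le_refl]
    · exact (div_le_iff₀ (hUpos x ⟨hlt, hx.2⟩)).1 (le_csSup hRbdd ⟨x, ⟨hlt, hx.2⟩, rfl⟩)
  suffices hK : K ≤ 1 from fun x hx =>
    (hVK x hx).trans (mul_le_of_le_one_left (hUnn x hx) hK)
  by_contra! hK
  obtain ⟨ε, hε, hVε⟩ := hU.exists_le_sub_mul hl hd hq hJ hJnn hJ0 hh hhdec hV hK hVK
  have hKε : K ≤ K - ε := csSup_le hRne <| by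
    rintro _ ⟨x, hx, rfl⟩
    exact (div_le_iff₀ (hUpos x hx)).2 (hVε x hx)
  linarith

end NeumannStatSol

theorem neumann_stationary_uniqueness_general
    (l₁ l₂ d q : ℝ) (J : ℝ → ℝ) (h : ℝ → ℝ → ℝ)
    (hl : l₁ < l₂) (hd : 0 < d) (hq : 0 < q)
    -- condition (J)
    (hJc : Continuous J) (hJnn : ∀ x, 0 ≤ J x) (hJ0 : 0 < J 0)
    -- KPP nonlinearity
    (hhC1 : ContDiffOn ℝ 1 (fun p : ℝ × ℝ => h p.1 p.2) (Set.Icc l₁ l₂ ×ˢ Set.Ici 0))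
    (hhdec : ∀ x ∈ Set.Icc l₁ l₂, StrictAntiOn (fun u => h x u) (Set.Ici 0)) :
    ∀ U₁ U₂, NeumannStatSol l₁ l₂ d q J h U₁ → NeumannStatSol l₁ l₂ d q J h U₂ →
      ∀ x ∈ Set.Icc l₁ l₂, U₁ x = U₂ x := by
  intro U₁ U₂ hU₁ hU₂ x hx
  have hh := hhC1.continuousOn
  exact le_antisymm (hU₁.le hl hd hq hJc hJnn hJ0 hh hhdec hU₂ x hx)
    (hU₂.le hl hd hq hJc hJnn hJ0 hh hhdec hU₁ x hx)

/-- **Uniqueness of the nontrivial stationary solution (Neumann case).**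
The Neumann stationary problem has at most one nontrivial solution. -/
theorem neumann_stationary_uniqueness
    (l₁ l₂ d q : ℝ) (J : ℝ → ℝ) (h : ℝ → ℝ → ℝ)
    (hl : l₁ < l₂) (hd : 0 < d) (hq : 0 < q)
    -- condition (J)
    (hJc : Continuous J) (hJnn : ∀ x, 0 ≤ J x) (hJ0 : 0 < J 0)
    (hJint : MeasureTheory.Integrable J) (hJ1 : (∫ x, J x) = 1)
    -- condition (J1)
    (hJsymm : ∀ x, J (-x) = J x) (hJbdd : ∃ C, ∀ x, J x ≤ C)
    -- KPP nonlinearity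
    (hhC1 : ContDiffOn ℝ 1 (fun p : ℝ × ℝ => h p.1 p.2) (Set.Icc l₁ l₂ ×ˢ Set.Ici 0))
    (hhdec : ∀ x ∈ Set.Icc l₁ l₂, StrictAntiOn (fun u => h x u) (Set.Ici 0))
    (hhN : ∃ N > 0, ∀ x ∈ Set.Icc l₁ l₂, ∀ u > N, h x u < 0) :
    ∀ U₁ U₂, NeumannStatSol l₁ l₂ d q J h U₁ → NeumannStatSol l₁ l₂ d q J h U₂ →
      ∀ x ∈ Set.Icc l₁ l₂, U₁ x = U₂ x :=
  neumann_stationary_uniqueness_general l₁ l₂ d q J h hl hd hq hJc hJnn hJ0 hhC1 hhdec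
end
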